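/- arXiv:1411.0505 — 2 statements merged into one kernel-verified Lean document; each statement's English description precedes it below -/
import Mathlib

section
/- Let K ⊂ ℝ be the attractor of the IFS {g₁(x) = x/3, g₂(x) = (x+8)/9}. Then dim_H(K+K) = (ln t₀)/(−ln 3), where t₀ is the smallest positive root of the polynomial equation t³ − t² − 2t + 1 = 0. -/
/-!
Put `S = K + K` and `T = 3K + K`. From `K = K/3 ∪ (K + 8)/9` one gets the graph-directed system
`S = S/3 ∪ (T + 8)/9 ∪ (S + 16)/9` and `T = S ∪ (S + 8)/3 ∪ (T + 32)/9`, whose pieces lie in the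
hulls `[0, 2]`, `[0, 4]` and are separated by gaps of length at least `2/9`. Give a path of
contraction `3^(-m)` ending in state `q` the weight `t₀^m · v q` with `v = (t₀², 1 - t₀ - t₀²)`;
since `v` is a fixed vector of the weighted transition matrix, the weights of all paths of a given
length add up to `v` of the initial state. With `s = log t₀ / -log 3` the weight of a path is
comparable to `(3^(-m))^s`, the `s`-th power of the length of its cylinder. Covering `S` by
cylinders shows `μH[s] S < ∞`; conversely a set `U` meets only boundedly many cylinders of length
comparable to `diam U`, thanks to the gaps, so every cover satisfies `∑ diam^s ≥ const` and
`μH[s] S > 0`.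
-/

open Set Metric MeasureTheory Filter
open scoped ENNReal Pointwise Topology

lemma List.exists_eq_append_cons_of_not_prefix {α : Type*} {w w' : List α} (h : ¬w <+: w')
    (h' : ¬w' <+: w) : ∃ u a a' s s', a ≠ a' ∧ w = u ++ a :: s ∧ w' = u ++ a' :: s' := by
  induction w generalizing w' with
  | nil => exact absurd w'.nil_prefix h
  | cons a w ih =>
    cases w' with
    | nil => exact absurd List.nil_prefix h'
    | cons a' w' =>
      by_cases ha : a = a'
      · subst ha
        obtain ⟨u, b, b', s, s', hb, rfl, rfl⟩ :=
          ih (fun hp => h (List.cons_prefix_cons.mpr ⟨rfl, hp⟩))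
            (fun hp => h' (List.cons_prefix_cons.mpr ⟨rfl, hp⟩))
        exact ⟨a :: u, b, b', s, s', hb, rfl, rfl⟩
      · exact ⟨[], a, a', w, w', ha, rfl, rfl⟩

lemma List.IsPrefix.prefix_dropLast {α : Type*} {u w : List α} (h : u <+: w) (hne : u ≠ w) :
    u <+: w.dropLast := by
  obtain ⟨_ | ⟨a, v⟩, rfl⟩ := h
  · simp at hne
  · rw [List.dropLast_append_cons]
    exact List.prefix_append _ _

lemma Finset.card_le_of_separated {ι : Type*} {s : Finset ι} {f : ι → ℝ} {ε : ℝ} {N : ℕ}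
    (hε : 0 < ε) (hsep : ∀ i ∈ s, ∀ j ∈ s, i ≠ j → ε ≤ |f i - f j|)
    (hbound : ∀ i ∈ s, ∀ j ∈ s, |f i - f j| ≤ N * ε) : s.card ≤ 2 * N + 1 := by
  obtain rfl | ⟨i₀, hi₀⟩ := s.eq_empty_or_nonempty
  · simp
  have hcard : (Finset.Icc (-N : ℤ) N).card = 2 * N + 1 := by
    rw [Int.card_Icc]; omega
  rw [← hcard]
  refine Finset.card_le_card_of_injOn (fun i => ⌊(f i - f i₀) / ε⌋) (fun i hi => ?_)
    (fun i hi j hj hij => ?_)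
  · have : |(f i - f i₀) / ε| ≤ N := by
      rw [abs_div, abs_of_pos hε, div_le_iff₀ hε]
      exact hbound i hi i₀ hi₀
    rw [abs_le] at this
    simp only [Finset.coe_Icc]
    constructor
    · exact Int.le_floor.mpr (by push_cast; linarith)
    · exact Int.floor_le_iff.mpr (by push_cast; linarith)
  · by_contra hne
    have := Int.abs_sub_lt_one_of_floor_eq_floor hij
    rw [← sub_div, sub_sub_sub_cancel_right, abs_div, abs_of_pos hε, div_lt_one hε] at this
    exact this.not_ge (hsep i hi j hj hne)

lemma Real.diam_thickening_pos {s : Set ℝ} (hs : s.Nonempty) (hb : Bornology.IsBounded s) {δ : ℝ}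
    (hδ : 0 < δ) : 0 < diam (thickening δ s) := by
  obtain ⟨x, hx⟩ := hs
  calc 0 < 2 * δ := by positivity
    _ = diam (ball x δ) := by rw [Real.ball_eq_Ioo, Real.diam_Ioo (by linarith)]; ring
    _ ≤ diam (thickening δ s) := diam_mono (ball_subset_thickening hx δ) hb.thickening

/-- Thickening the sets of a cover by radii `δ i` with `∑ (2 δ i) ^ d ≤ c / 2` turns it into an
open cover, which has a finite subcover by compactness. -/
lemma Real.exists_finset_half_le_sum_diam_rpow {K : Set ℝ} (hK : IsCompact K) {c d r : ℝ}
    (hc : 0 < c) (hd₀ : 0 < d) (hd₁ : d ≤ 1) (hr : 0 < r)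
    (h : ∀ (F : Finset ℕ) (U : ℕ → Set ℝ), K ⊆ ⋃ i ∈ F, U i →
      (∀ i ∈ F, 0 < diam (U i) ∧ diam (U i) < r) → c ≤ ∑ i ∈ F, diam (U i) ^ d)
    {t : ℕ → Set ℝ} (hcov : K ⊆ ⋃ i, t i) (hbdd : ∀ i, Bornology.IsBounded (t i))
    (hdiam : ∀ i, diam (t i) ≤ r / 4) :
    ∃ F : Finset ℕ, (∀ i ∈ F, (t i).Nonempty) ∧ c / 2 ≤ ∑ i ∈ F, diam (t i) ^ d := by
  classical
  set δ : ℕ → ℝ := fun i => min ((c / 4 * (1 / 2) ^ i) ^ d⁻¹ / 2) (r / 4)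
  have hδ (i : ℕ) : 0 < δ i := lt_min (by positivity) (by positivity)
  have hδd (i : ℕ) : (2 * δ i) ^ d ≤ c / 4 * (1 / 2) ^ i := calc
    (2 * δ i) ^ d ≤ (2 * ((c / 4 * (1 / 2) ^ i) ^ d⁻¹ / 2)) ^ d := by
      gcongr
      exact min_le_left _ _
    _ = c / 4 * (1 / 2) ^ i := by
      rw [mul_div_cancel₀ _ two_ne_zero, Real.rpow_inv_rpow (by positivity) hd₀.ne']
  obtain ⟨F, hF⟩ := hK.elim_finite_subcover (fun i => thickening (δ i) (t i))
    (fun _ => isOpen_thickening) (hcov.trans (iUnion_mono fun i => self_subset_thickening (hδ i) _))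
  set F' := F.filter fun i => (t i).Nonempty
  have hF' : K ⊆ ⋃ i ∈ F', thickening (δ i) (t i) := fun x hx => by
    obtain ⟨i, hi, hxi⟩ := mem_iUnion₂.mp (hF hx)
    exact mem_iUnion₂.mpr
      ⟨i, Finset.mem_filter.mpr ⟨hi, (thickening_nonempty_iff.mp ⟨x, hxi⟩).2⟩, hxi⟩
  have hcover := h F' _ hF' fun i hi => ⟨Real.diam_thickening_pos (Finset.mem_filter.mp hi).2
    (hbdd i) (hδ i), (diam_thickening_le _ (hδ i).le).trans_lt
      (by linarith [hdiam i, min_le_right ((c / 4 * (1 / 2) ^ i) ^ d⁻¹ / 2) (r / 4)])⟩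
  have hgeom : ∑ i ∈ F', c / 4 * (1 / 2 : ℝ) ^ i ≤ c / 2 := by
    have := summable_geometric_two.sum_le_tsum F' fun _ _ => by positivity
    rw [tsum_geometric_two] at this
    rw [← Finset.mul_sum]
    nlinarith
  have : ∑ i ∈ F', diam (thickening (δ i) (t i)) ^ d
      ≤ ∑ i ∈ F', (diam (t i) ^ d + c / 4 * (1 / 2) ^ i) := Finset.sum_le_sum fun i _ =>
    (Real.rpow_le_rpow diam_nonneg (diam_thickening_le _ (hδ i).le) hd₀.le).trans <|
      (Real.rpow_add_le_add_rpow diam_nonneg (by positivity) hd₀.le hd₁).trans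
        (add_le_add_right (hδd i) _)
  rw [Finset.sum_add_distrib] at this
  exact ⟨F', fun i hi => (Finset.mem_filter.mp hi).2, by linarith⟩

theorem Real.ofReal_le_hausdorffMeasure_of_finite_covers {K : Set ℝ} (hK : IsCompact K)
    {c d r : ℝ} (hc : 0 < c) (hd₀ : 0 < d) (hd₁ : d ≤ 1) (hr : 0 < r)
    (h : ∀ (F : Finset ℕ) (U : ℕ → Set ℝ), K ⊆ ⋃ i ∈ F, U i →
      (∀ i ∈ F, 0 < diam (U i) ∧ diam (U i) < r) → c ≤ ∑ i ∈ F, diam (U i) ^ d) :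
    ENNReal.ofReal (c / 2) ≤ μH[d] K := by
  rw [Measure.hausdorffMeasure_apply]
  refine le_iSup₂_of_le (ENNReal.ofReal (r / 4)) (by simpa using hr)
    (le_iInf fun t => le_iInf fun hcov => le_iInf fun hdiam => ?_)
  have hbdd (i : ℕ) : Bornology.IsBounded (t i) :=
    isBounded_iff_ediam_ne_top.2 (ne_top_of_le_ne_top ENNReal.ofReal_ne_top (hdiam i))
  obtain ⟨F, hne, hF⟩ := Real.exists_finset_half_le_sum_diam_rpow hK hc hd₀ hd₁ hr h hcov hbdd
    fun i => ENNReal.toReal_le_of_le_ofReal (by positivity) (hdiam i)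
  calc ENNReal.ofReal (c / 2) ≤ ENNReal.ofReal (∑ i ∈ F, diam (t i) ^ d) :=
        ENNReal.ofReal_le_ofReal hF
    _ = ∑ i ∈ F, ediam (t i) ^ d := by
        rw [ENNReal.ofReal_sum_of_nonneg fun _ _ => by positivity]
        refine Finset.sum_congr rfl fun i _ => ?_
        rw [← ENNReal.ofReal_rpow_of_nonneg diam_nonneg hd₀.le, diam,
          ENNReal.ofReal_toReal (isBounded_iff_ediam_ne_top.1 (hbdd i))]
    _ ≤ ∑ i ∈ F, ⨆ _ : (t i).Nonempty, ediam (t i) ^ d :=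
        Finset.sum_le_sum fun i hi => le_iSup_of_le (hne i hi) le_rfl
    _ ≤ ∑' i, ⨆ _ : (t i).Nonempty, ediam (t i) ^ d := ENNReal.sum_le_tsum F

namespace CantorSumset

/- State `false` stands for `K + K` and `true` for `3K + K`; edge `e` leads from any state `q`
with `e ∈ edgesFrom q` to `target e`, and `[0, hullLen q]` is the convex hull of state `q`. -/

def target : Fin 5 → Bool := ![false, true, false, false, true]

def expo : Fin 5 → ℕ := ![1, 2, 2, 1, 2]

def shift : Fin 5 → ℝ := ![0, 8, 16, 8, 32]

def edgesFrom (q : Bool) : Finset (Fin 5) := if q then Finset.univ else {0, 1, 2}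

def hullLen (q : Bool) : ℝ := if q then 4 else 2

noncomputable def edgeMap (e : Fin 5) (y : ℝ) : ℝ := (y + shift e) / 3 ^ expo e

noncomputable def pathMap : List (Fin 5) → ℝ → ℝ
  | [], y => y
  | e :: w, y => edgeMap e (pathMap w y)

def pathExpo (w : List (Fin 5)) : ℕ := (w.map expo).sum

def endState : Bool → List (Fin 5) → Bool
  | q, [] => q
  | _, e :: w => endState (target e) w

def IsPath : Bool → List (Fin 5) → Prop
  | _, [] => True
  | q, e :: w => e ∈ edgesFrom q ∧ IsPath (target e) w

def paths : Bool → ℕ → Finset (List (Fin 5))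
  | _, 0 => {[]}
  | q, n + 1 => (edgesFrom q).biUnion fun e => (paths (target e) n).image (e :: ·)

section Paths

variable {q : Bool} {u v w : List (Fin 5)}

@[simp] lemma pathMap_nil : pathMap [] = id := rfl

@[simp] lemma pathMap_cons (e : Fin 5) (w : List (Fin 5)) (y : ℝ) :
    pathMap (e :: w) y = edgeMap e (pathMap w y) := rfl

lemma pathMap_append (u v : List (Fin 5)) (y : ℝ) :
    pathMap (u ++ v) y = pathMap u (pathMap v y) := by
  induction u with
  | nil => rfl
  | cons e u ih => simp [ih]

@[simp] lemma pathExpo_nil : pathExpo [] = 0 := rfl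

@[simp] lemma pathExpo_cons (e : Fin 5) (w : List (Fin 5)) :
    pathExpo (e :: w) = expo e + pathExpo w := by
  simp [pathExpo]

lemma pathExpo_append (u v : List (Fin 5)) : pathExpo (u ++ v) = pathExpo u + pathExpo v := by
  simp [pathExpo]

lemma one_le_expo (e : Fin 5) : 1 ≤ expo e := by
  fin_cases e <;> simp [expo]

lemma length_le_pathExpo (w : List (Fin 5)) : w.length ≤ pathExpo w := by
  induction w with
  | nil => simp
  | cons e w ih =>
    simp only [List.length_cons, pathExpo_cons]
    linarith [one_le_expo e]

@[simp] lemma endState_nil (q : Bool) : endState q [] = q := rfl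

@[simp] lemma endState_cons (q : Bool) (e : Fin 5) (w : List (Fin 5)) :
    endState q (e :: w) = endState (target e) w := rfl

lemma endState_append (q : Bool) (u v : List (Fin 5)) :
    endState q (u ++ v) = endState (endState q u) v := by
  induction u generalizing q with
  | nil => rfl
  | cons e u ih => simp [ih]

@[simp] lemma isPath_nil (q : Bool) : IsPath q [] := trivial

@[simp] lemma isPath_cons {e : Fin 5} :
    IsPath q (e :: w) ↔ e ∈ edgesFrom q ∧ IsPath (target e) w := Iff.rfl

lemma isPath_append : IsPath q (u ++ v) ↔ IsPath q u ∧ IsPath (endState q u) v := by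
  induction u generalizing q with
  | nil => simp
  | cons e u ih => simp [ih, and_assoc]

lemma IsPath.of_prefix (hw : IsPath q w) (h : u <+: w) : IsPath q u := by
  obtain ⟨v, rfl⟩ := h
  exact (isPath_append.mp hw).1

lemma mem_paths {n : ℕ} : w ∈ paths q n ↔ w.length = n ∧ IsPath q w := by
  induction n generalizing q w with
  | zero => simp +contextual [paths, List.length_eq_zero_iff]
  | succ n ih =>
    cases w with
    | nil => simp [paths]
    | cons e w => simp [paths, ih, and_left_comm]

lemma sum_paths_succ {M : Type*} [AddCommMonoid M] (q : Bool) (n : ℕ) (f : List (Fin 5) → M) :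
    ∑ w ∈ paths q (n + 1), f w = ∑ e ∈ edgesFrom q, ∑ w ∈ paths (target e) n, f (e :: w) := by
  rw [paths, Finset.sum_biUnion]
  · exact Finset.sum_congr rfl fun e _ => Finset.sum_image fun _ _ _ _ h => List.cons_injective h
  · intro e _ e' _ he
    simp only [Function.onFun, Finset.disjoint_left, Finset.mem_image]
    rintro _ ⟨w, -, rfl⟩ ⟨w', -, h⟩
    exact he (List.cons_eq_cons.mp h).1.symm

end Paths

noncomputable def stateWeight (t : ℝ) (q : Bool) : ℝ := if q then 1 - t - t ^ 2 else t ^ 2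

noncomputable def pathWeight (t : ℝ) (q : Bool) (w : List (Fin 5)) : ℝ :=
  t ^ pathExpo w * stateWeight t (endState q w)

section Weights

variable {t : ℝ} {q : Bool} {n : ℕ}

lemma stateWeight_mem_Icc (h₁ : 1 / 3 ≤ t) (h₂ : t ≤ 1 / 2) (q : Bool) :
    stateWeight t q ∈ Icc (1 / 9) 1 := by
  cases q <;> simp only [stateWeight, Bool.false_eq_true, if_false, if_true, mem_Icc] <;>
    constructor <;> nlinarith

lemma pathWeight_nonneg (h₁ : 1 / 3 ≤ t) (h₂ : t ≤ 1 / 2) (q : Bool) (w : List (Fin 5)) :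
    0 ≤ pathWeight t q w := by
  have := (stateWeight_mem_Icc h₁ h₂ (endState q w)).1
  unfold pathWeight
  have : 0 ≤ t := by linarith
  positivity

/-- `stateWeight t` is a fixed vector of the transition matrix `A q q' = ∑_{e : q → q'} t ^ expo e`,
and `det (A - 1) = (t + 1) (t³ - t² - 2t + 1)`. -/
lemma sum_edgesFrom_stateWeight (ht : t ^ 3 - t ^ 2 - 2 * t + 1 = 0) (q : Bool) :
    ∑ e ∈ edgesFrom q, t ^ expo e * stateWeight t (target e) = stateWeight t q := by
  cases q
  · simp [edgesFrom, stateWeight, expo, target]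
    ring
  · simp [edgesFrom, stateWeight, expo, target, Fin.sum_univ_five]
    linear_combination -(t + 1) * ht

lemma pathWeight_append (q : Bool) (u v : List (Fin 5)) :
    pathWeight t q (u ++ v) = t ^ pathExpo u * pathWeight t (endState q u) v := by
  simp only [pathWeight, pathExpo_append, endState_append, pow_add, mul_assoc]

lemma pathWeight_cons (q : Bool) (e : Fin 5) (w : List (Fin 5)) :
    pathWeight t q (e :: w) = t ^ expo e * pathWeight t (target e) w := by
  simp only [pathWeight, pathExpo_cons, endState_cons, pow_add, mul_assoc]

lemma sum_pathWeight (ht : t ^ 3 - t ^ 2 - 2 * t + 1 = 0) (q : Bool) (n : ℕ) :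
    ∑ w ∈ paths q n, pathWeight t q w = stateWeight t q := by
  induction n generalizing q with
  | zero => simp [paths, pathWeight]
  | succ n ih =>
    rw [sum_paths_succ, ← sum_edgesFrom_stateWeight ht q]
    refine Finset.sum_congr rfl fun e _ => ?_
    simp only [pathWeight_cons, ← Finset.mul_sum, ih]

lemma sum_pathWeight_of_prefix (ht : t ^ 3 - t ^ 2 - 2 * t + 1 = 0) {u : List (Fin 5)}
    (hu : IsPath q u) (n : ℕ) :
    ∑ w ∈ (paths q (u.length + n)).filter (u <+: ·), pathWeight t q w = pathWeight t q u := by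
  have : (paths q (u.length + n)).filter (u <+: ·) = (paths (endState q u) n).image (u ++ ·) := by
    ext w
    simp only [Finset.mem_filter, Finset.mem_image, mem_paths]
    constructor
    · rintro ⟨⟨hlen, hw⟩, v, rfl⟩
      exact ⟨v, ⟨by simpa using hlen, (isPath_append.mp hw).2⟩, rfl⟩
    · rintro ⟨v, ⟨rfl, hv⟩, rfl⟩
      exact ⟨⟨by simp, isPath_append.mpr ⟨hu, hv⟩⟩, v, rfl⟩
  rw [this, Finset.sum_image fun _ _ _ _ h => List.append_cancel_left h]
  simp only [pathWeight_append, ← Finset.mul_sum, sum_pathWeight ht]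
  rfl

/-- A discrete form of the mass distribution principle. -/
lemma stateWeight_le_sum_pathWeight (ht : t ^ 3 - t ^ 2 - 2 * t + 1 = 0) (h₁ : 1 / 3 ≤ t)
    (h₂ : t ≤ 1 / 2) {κ : Type*} {S : Finset κ} {u : κ → List (Fin 5)}
    (hS : ∀ k ∈ S, (u k).length ≤ n ∧ IsPath q (u k))
    (hcov : ∀ w ∈ paths q n, ∃ k ∈ S, u k <+: w) :
    stateWeight t q ≤ ∑ k ∈ S, pathWeight t q (u k) := by
  classical
  have hnonneg := pathWeight_nonneg h₁ h₂ q
  calc stateWeight t q = ∑ w ∈ paths q n, pathWeight t q w := (sum_pathWeight ht q n).symm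
    _ ≤ ∑ w ∈ paths q n, ∑ k ∈ S, if u k <+: w then pathWeight t q w else 0 := by
      refine Finset.sum_le_sum fun w hw => ?_
      obtain ⟨k, hk, hpre⟩ := hcov w hw
      refine le_trans (le_of_eq (if_pos hpre).symm) (Finset.single_le_sum (f := fun k =>
        if u k <+: w then pathWeight t q w else 0) (fun k _ => ?_) hk)
      split_ifs <;> simp [hnonneg]
    _ = ∑ k ∈ S, ∑ w ∈ (paths q n).filter (u k <+: ·), pathWeight t q w := by
      rw [Finset.sum_comm]
      simp only [Finset.sum_filter]
    _ = ∑ k ∈ S, pathWeight t q (u k) := by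
      refine Finset.sum_congr rfl fun k hk => ?_
      obtain ⟨hlen, hpath⟩ := hS k hk
      rw [← Nat.add_sub_cancel' hlen, sum_pathWeight_of_prefix ht hpath]

end Weights

section Geometry

variable {q : Bool} {e e' : Fin 5} {y y' : ℝ}

lemma hullLen_pos (q : Bool) : 0 < hullLen q := by
  cases q <;> norm_num [hullLen]

lemma hullLen_mem_Icc (q : Bool) : hullLen q ∈ Icc 2 4 := by
  cases q <;> norm_num [hullLen]

lemma edgeMap_mem_hull (he : e ∈ edgesFrom q) (hy : y ∈ Icc 0 (hullLen (target e))) :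
    edgeMap e y ∈ Icc 0 (hullLen q) := by
  cases q <;> fin_cases he <;>
    simp_all [edgeMap, shift, expo, hullLen, target] <;> constructor <;> linarith

lemma edgeMap_add_le (h : e < e') (hy : y ∈ Icc 0 (hullLen (target e)))
    (hy' : y' ∈ Icc 0 (hullLen (target e'))) : edgeMap e y + 2 / 9 ≤ edgeMap e' y' := by
  fin_cases e <;> fin_cases e' <;> simp_all [Fin.lt_def, edgeMap, shift, expo, hullLen, target] <;>
    linarith

lemma le_abs_edgeMap_sub (h : e ≠ e') (hy : y ∈ Icc 0 (hullLen (target e)))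
    (hy' : y' ∈ Icc 0 (hullLen (target e'))) : 2 / 9 ≤ |edgeMap e y - edgeMap e' y'| := by
  rcases h.lt_or_gt with h | h
  · rw [abs_sub_comm, abs_of_nonneg] <;> linarith [edgeMap_add_le h hy hy']
  · rw [abs_of_nonneg] <;> linarith [edgeMap_add_le h hy' hy]

lemma pathMap_sub (w : List (Fin 5)) (y z : ℝ) :
    pathMap w y - pathMap w z = 3⁻¹ ^ pathExpo w * (y - z) := by
  induction w with
  | nil => simp
  | cons e w ih =>
    calc edgeMap e (pathMap w y) - edgeMap e (pathMap w z)
        = 3⁻¹ ^ expo e * (pathMap w y - pathMap w z) := by simp only [edgeMap, inv_pow]; ring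
      _ = 3⁻¹ ^ pathExpo (e :: w) * (y - z) := by rw [ih, pathExpo_cons, pow_add, mul_assoc]

lemma pathMap_mem_hull {w : List (Fin 5)} (hw : IsPath q w)
    (hy : y ∈ Icc 0 (hullLen (endState q w))) : pathMap w y ∈ Icc 0 (hullLen q) := by
  induction w generalizing q with
  | nil => exact hy
  | cons e w ih => exact edgeMap_mem_hull hw.1 (ih hw.2 hy)

lemma le_abs_pathMap_sub {u s s' : List (Fin 5)} (hw : IsPath q (u ++ e :: s))
    (hw' : IsPath q (u ++ e' :: s')) (he : e ≠ e')
    (hy : y ∈ Icc 0 (hullLen (endState q (u ++ e :: s))))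
    (hy' : y' ∈ Icc 0 (hullLen (endState q (u ++ e' :: s')))) :
    2 / 9 * 3⁻¹ ^ pathExpo u ≤ |pathMap (u ++ e :: s) y - pathMap (u ++ e' :: s') y'| := by
  rw [isPath_append] at hw hw'
  rw [endState_append] at hy hy'
  rw [pathMap_append, pathMap_append, pathMap_sub, abs_mul, abs_of_pos (by positivity), mul_comm]
  gcongr
  exact le_abs_edgeMap_sub he (pathMap_mem_hull hw.2.2 hy) (pathMap_mem_hull hw'.2.2 hy')

end Geometry

def cylinder (q : Bool) (w : List (Fin 5)) : Set ℝ := pathMap w '' Icc 0 (hullLen (endState q w))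

noncomputable def width (q : Bool) (w : List (Fin 5)) : ℝ :=
  hullLen (endState q w) * 3⁻¹ ^ pathExpo w

section Cylinders

variable {q : Bool} {u w : List (Fin 5)}

lemma cylinder_eq_Icc (q : Bool) (w : List (Fin 5)) :
    cylinder q w = Icc (pathMap w 0) (pathMap w 0 + width q w) := by
  have : pathMap w = fun y => 3⁻¹ ^ pathExpo w * y + pathMap w 0 :=
    funext fun y => by linarith [pathMap_sub w y 0]
  rw [cylinder, this, image_affine_Icc' (by positivity)]
  simp only [width, mul_zero, zero_add]
  ring_nf

lemma ediam_cylinder (q : Bool) (w : List (Fin 5)) :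
    ediam (cylinder q w) = ENNReal.ofReal (width q w) := by
  rw [cylinder_eq_Icc, Real.ediam_Icc, add_sub_cancel_left]

lemma abs_sub_le_width {x y : ℝ} (hx : x ∈ cylinder q w) (hy : y ∈ cylinder q w) :
    |x - y| ≤ width q w := by
  rw [cylinder_eq_Icc] at hx hy
  exact abs_sub_le_iff.mpr ⟨by linarith [hx.2, hy.1], by linarith [hx.1, hy.2]⟩

lemma width_nil (q : Bool) : width q [] = hullLen q := by simp [width]

lemma width_mem_Icc (q : Bool) (w : List (Fin 5)) :
    width q w ∈ Icc (2 * 3⁻¹ ^ pathExpo w) (4 * 3⁻¹ ^ pathExpo w) := by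
  obtain ⟨h₂, h₄⟩ := hullLen_mem_Icc (endState q w)
  exact ⟨by unfold width; gcongr, by unfold width; gcongr⟩

lemma tendsto_four_mul_inv_three_pow : Tendsto (fun n : ℕ => 4 * (3 : ℝ)⁻¹ ^ n) atTop (𝓝 0) := by
  simpa using (tendsto_pow_atTop_nhds_zero_of_lt_one (by norm_num)
    (by norm_num : (3 : ℝ)⁻¹ < 1)).const_mul 4

lemma width_le_of_mem_paths {n : ℕ} (hw : w ∈ paths q n) : width q w ≤ 4 * 3⁻¹ ^ n := by
  refine (width_mem_Icc q w).2.trans ?_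
  gcongr 4 * ?_
  exact pow_le_pow_of_le_one (by norm_num) (by norm_num)
    ((mem_paths.mp hw).1.symm.le.trans (length_le_pathExpo w))

lemma width_le_of_prefix (h : u <+: w) : width q w ≤ width q u := by
  obtain ⟨_ | ⟨e, v⟩, rfl⟩ := h
  · simp
  have he := one_le_expo e
  have hw := (width_mem_Icc q (u ++ e :: v)).2
  have hu := (width_mem_Icc q u).1
  have : (3 : ℝ)⁻¹ ^ pathExpo (e :: v) ≤ 3⁻¹ := by
    simpa using pow_le_pow_of_le_one (a := (3 : ℝ)⁻¹) (by norm_num) (by norm_num)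
      (show 1 ≤ pathExpo (e :: v) by simp only [pathExpo_cons]; omega)
  rw [pathExpo_append, pow_add] at hw
  nlinarith [pow_pos (by norm_num : (0 : ℝ) < 3⁻¹) (pathExpo u)]

end Cylinders

section Exponent

variable {t : ℝ}

lemma logb_inv_three_pos (h₁ : 1 / 3 ≤ t) (h₂ : t ≤ 1 / 2) : 0 < Real.logb 3⁻¹ t :=
  Real.logb_pos_of_base_lt_one (by norm_num) (by norm_num) (by linarith) (by linarith)

lemma logb_inv_three_le_one (h₁ : 1 / 3 ≤ t) : Real.logb 3⁻¹ t ≤ 1 := by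
  rw [← (Real.logb_self_eq_one_iff (b := (3 : ℝ)⁻¹)).mpr ⟨by norm_num, by norm_num, by norm_num⟩,
    Real.logb_le_logb_of_base_lt_one (by norm_num) (by norm_num) (by linarith) (by norm_num)]
  linarith

lemma inv_three_pow_rpow_logb (ht : 0 < t) (n : ℕ) :
    ((3 : ℝ)⁻¹ ^ n) ^ Real.logb 3⁻¹ t = t ^ n := by
  rw [← Real.rpow_natCast, ← Real.rpow_mul (by norm_num), mul_comm, Real.rpow_mul (by norm_num),
    Real.rpow_logb (by norm_num) (by norm_num) ht, Real.rpow_natCast]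

lemma width_rpow_logb (ht : 0 < t) (q : Bool) (w : List (Fin 5)) :
    width q w ^ Real.logb 3⁻¹ t = hullLen (endState q w) ^ Real.logb 3⁻¹ t * t ^ pathExpo w := by
  rw [width, Real.mul_rpow (hullLen_pos _).le (by positivity), inv_three_pow_rpow_logb ht]

lemma ediam_cylinder_rpow_logb_le (h₁ : 1 / 3 ≤ t) (h₂ : t ≤ 1 / 2) (q : Bool) (w : List (Fin 5)) :
    ediam (cylinder q w) ^ Real.logb 3⁻¹ t ≤
      ENNReal.ofReal (9 * 4 ^ Real.logb 3⁻¹ t * pathWeight t q w) := by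
  have htpos : 0 < t := by linarith
  have hs : 0 ≤ Real.logb 3⁻¹ t := (logb_inv_three_pos h₁ h₂).le
  rw [ediam_cylinder,
    ENNReal.ofReal_rpow_of_nonneg ((width_mem_Icc q w).1.trans' (by positivity)) hs,
    width_rpow_logb htpos]
  refine ENNReal.ofReal_le_ofReal ?_
  obtain ⟨h9, -⟩ := stateWeight_mem_Icc h₁ h₂ (endState q w)
  have h4 : hullLen (endState q w) ^ Real.logb 3⁻¹ t ≤ 4 ^ Real.logb 3⁻¹ t :=
    Real.rpow_le_rpow (hullLen_pos _).le (hullLen_mem_Icc _).2 hs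
  calc hullLen (endState q w) ^ Real.logb 3⁻¹ t * t ^ pathExpo w
      ≤ 4 ^ Real.logb 3⁻¹ t * (9 * stateWeight t (endState q w) * t ^ pathExpo w) := by
        gcongr
        nlinarith [pow_pos htpos (pathExpo w)]
    _ = 9 * 4 ^ Real.logb 3⁻¹ t * pathWeight t q w := by rw [pathWeight]; ring

lemma pathWeight_le_rpow_logb {d : ℝ} (h₁ : 1 / 3 ≤ t) (h₂ : t ≤ 1 / 2) {q : Bool}
    {u : List (Fin 5)} (hu : width q u ≤ d) : pathWeight t q u ≤ d ^ Real.logb 3⁻¹ t := by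
  have htpos : 0 < t := by linarith
  have hM : (3 : ℝ)⁻¹ ^ pathExpo u ≤ d := by
    linarith [(width_mem_Icc q u).1, pow_pos (by norm_num : (0 : ℝ) < 3⁻¹) (pathExpo u)]
  calc pathWeight t q u ≤ t ^ pathExpo u :=
        mul_le_of_le_one_right (by positivity) (stateWeight_mem_Icc h₁ h₂ _).2
    _ = (3⁻¹ ^ pathExpo u) ^ Real.logb 3⁻¹ t := (inv_three_pow_rpow_logb htpos _).symm
    _ ≤ d ^ Real.logb 3⁻¹ t := Real.rpow_le_rpow (by positivity) hM
        (logb_inv_three_pos h₁ h₂).le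

end Exponent

open scoped Classical in
noncomputable def cutAt (q : Bool) (d : ℝ) (n : ℕ) : Finset (List (Fin 5)) :=
  ((Finset.range (n + 1)).biUnion (paths q)).filter
    fun u => u ≠ [] ∧ width q u ≤ d ∧ d < width q u.dropLast

section Cut

variable {q : Bool} {d : ℝ} {n : ℕ} {u u' w : List (Fin 5)}

lemma mem_cutAt : u ∈ cutAt q d n ↔
    (u.length ≤ n ∧ IsPath q u) ∧ u ≠ [] ∧ width q u ≤ d ∧ d < width q u.dropLast := by
  simp [cutAt, mem_paths]

lemma not_prefix_of_mem_cutAt (hu : u ∈ cutAt q d n) (hu' : u' ∈ cutAt q d n) (hne : u ≠ u') :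
    ¬u <+: u' := fun h => by
  have := width_le_of_prefix (q := q) (h.prefix_dropLast hne)
  linarith [(mem_cutAt.mp hu).2.2.1, (mem_cutAt.mp hu').2.2.2]

lemma lt_abs_sub_of_mem_cutAt (hu : u ∈ cutAt q d n) (hu' : u' ∈ cutAt q d n) (hne : u ≠ u')
    {p p' : ℝ} (hp : p ∈ cylinder q u) (hp' : p' ∈ cylinder q u') : d / 18 < |p - p'| := by
  obtain ⟨g, e, e', s, s', he, rfl, rfl⟩ := List.exists_eq_append_cons_of_not_prefix
    (not_prefix_of_mem_cutAt hu hu' hne) (not_prefix_of_mem_cutAt hu' hu hne.symm)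
  obtain ⟨⟨-, hpath⟩, -, -, hparent⟩ := mem_cutAt.mp hu
  obtain ⟨y, hy, rfl⟩ := hp
  obtain ⟨y', hy', rfl⟩ := hp'
  have hg : d < 4 * 3⁻¹ ^ pathExpo g := calc
    d < width q (g ++ e :: s).dropLast := hparent
    _ ≤ width q g :=
      width_le_of_prefix ((List.prefix_append g (e :: s)).prefix_dropLast (by simp))
    _ ≤ 4 * 3⁻¹ ^ pathExpo g := (width_mem_Icc q g).2
  linarith [le_abs_pathMap_sub hpath (mem_cutAt.mp hu').1.2 he hy hy']

open scoped Classical in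
lemma card_filter_cutAt_le (hd : 0 < d) {U : Set ℝ} (hU : ∀ x ∈ U, ∀ y ∈ U, |x - y| ≤ d) :
    ((cutAt q d n).filter fun u => (cylinder q u ∩ U).Nonempty).card ≤ 109 := by
  have hleft (u : List (Fin 5)) : pathMap u 0 ∈ cylinder q u := by
    rw [cylinder_eq_Icc]
    exact ⟨le_rfl, le_add_of_nonneg_right ((width_mem_Icc q u).1.trans' (by positivity))⟩
  refine Finset.card_le_of_separated (f := fun u => pathMap u 0) (ε := d / 18) (N := 54)
    (by positivity) (fun u hu u' hu' hne => ?_) (fun u hu u' hu' => ?_)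
  · simp only [Finset.mem_filter] at hu hu'
    exact (lt_abs_sub_of_mem_cutAt hu.1 hu'.1 hne (hleft u) (hleft u')).le
  · simp only [Finset.mem_filter] at hu hu'
    obtain ⟨⟨p, hpu, hpU⟩, ⟨p', hpu', hpU'⟩⟩ := And.intro hu.2 hu'.2
    have h₁ := abs_sub_le_width (hleft u) hpu
    have h₂ := abs_sub_le_width hpu' (hleft u')
    have := (mem_cutAt.mp hu.1).2.2.1
    have := (mem_cutAt.mp hu'.1).2.2.1
    calc |pathMap u 0 - pathMap u' 0| ≤ |pathMap u 0 - p| + |p - p'| + |p' - pathMap u' 0| :=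
          (abs_sub_le _ p _).trans (by linarith [abs_sub_le p p' (pathMap u' 0)])
      _ ≤ (54 : ℕ) * (d / 18) := by push_cast; linarith [hU p hpU p' hpU']

lemma exists_mem_cutAt_prefix (hw : w ∈ paths q n) (hd : d < hullLen q) (hwd : width q w ≤ d) :
    ∃ u ∈ cutAt q d n, u <+: w := by
  classical
  obtain ⟨hlen, hpath⟩ := mem_paths.mp hw
  have hex : ∃ k, width q (w.take k) ≤ d := ⟨w.length, by rwa [List.take_length]⟩
  set k := Nat.find hex
  have hk : 0 < k := Nat.pos_of_ne_zero fun h0 => by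
    have := Nat.find_spec hex
    rw [show Nat.find hex = 0 from h0, List.take_zero, width_nil] at this
    linarith
  have hkw : k ≤ w.length := Nat.find_min' hex (by rwa [List.take_length])
  refine ⟨w.take k,
    mem_cutAt.mpr ⟨⟨?_, hpath.of_prefix (w.take_prefix k)⟩, ?_, Nat.find_spec hex, ?_⟩,
    w.take_prefix k⟩
  · simp only [List.length_take]; omega
  · exact List.ne_nil_of_length_pos (by simp only [List.length_take]; omega)
  · have : (w.take k).dropLast = w.take (k - 1) := by
      rw [List.dropLast_eq_take, List.take_take, List.length_take]
      congr 1
      omega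
    rw [this, ← not_le]
    exact Nat.find_min hex (by omega)

open scoped Classical in
lemma sum_pathWeight_filter_cutAt_le {t : ℝ} (h₁ : 1 / 3 ≤ t) (h₂ : t ≤ 1 / 2) (hd : 0 < d)
    {U : Set ℝ} (hU : ∀ x ∈ U, ∀ y ∈ U, |x - y| ≤ d) :
    ∑ u ∈ (cutAt q d n).filter (fun u => (cylinder q u ∩ U).Nonempty), pathWeight t q u
      ≤ 109 * d ^ Real.logb 3⁻¹ t :=
  calc _ ≤ ∑ u ∈ (cutAt q d n).filter (fun u => (cylinder q u ∩ U).Nonempty),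
        d ^ Real.logb 3⁻¹ t := Finset.sum_le_sum fun u hu =>
          pathWeight_le_rpow_logb h₁ h₂ (mem_cutAt.mp (Finset.mem_filter.mp hu).1).2.2.1
    _ ≤ 109 * d ^ Real.logb 3⁻¹ t := by
        rw [Finset.sum_const, nsmul_eq_mul]
        gcongr
        exact_mod_cast card_filter_cutAt_le hd hU

end Cut

def IsAttractor (X : Bool → Set ℝ) : Prop :=
  ∀ q, X q = ⋃ e ∈ edgesFrom q, edgeMap e '' X (target e)

namespace IsAttractor

variable {X : Bool → Set ℝ} {t : ℝ}

lemma subset_biUnion_image_pathMap (hX : IsAttractor X) (n : ℕ) (q : Bool) :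
    X q ⊆ ⋃ w ∈ paths q n, pathMap w '' X (endState q w) := by
  induction n generalizing q with
  | zero => simp [paths]
  | succ n ih =>
    intro x hx
    rw [hX q] at hx
    obtain ⟨e, he, y, hy, rfl⟩ : ∃ e ∈ edgesFrom q, ∃ y ∈ X (target e), edgeMap e y = x := by
      simpa using hx
    obtain ⟨w, hw, z, hz, rfl⟩ : ∃ w ∈ paths (target e) n, ∃ z ∈ X (endState (target e) w),
        pathMap w z = y := by simpa using ih (target e) hy
    simp only [mem_iUnion, mem_image, mem_paths] at hw ⊢
    exact ⟨e :: w, ⟨by simp [hw.1], he, hw.2⟩, z, hz, rfl⟩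

lemma image_pathMap_subset (hX : IsAttractor X) {q : Bool} {w : List (Fin 5)} (hw : IsPath q w) :
    pathMap w '' X (endState q w) ⊆ X q := by
  induction w generalizing q with
  | nil => simp
  | cons e w ih =>
    rintro _ ⟨z, hz, rfl⟩
    rw [hX q]
    exact mem_biUnion hw.1 ⟨pathMap w z, ih hw.2 ⟨z, hz, rfl⟩, rfl⟩

lemma subset_biUnion_cylinder (hX : IsAttractor X) (hXh : ∀ q, X q ⊆ Icc 0 (hullLen q))
    (n : ℕ) (q : Bool) : X q ⊆ ⋃ w ∈ paths q n, cylinder q w :=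
  (hX.subset_biUnion_image_pathMap n q).trans <|
    iUnion₂_mono fun _ _ => image_mono (hXh _)

lemma exists_mem_forall_prefix (hX : IsAttractor X) (hXh : ∀ q, X q ⊆ Icc 0 (hullLen q))
    (hXne : ∀ q, (X q).Nonempty) {q : Bool} {w : List (Fin 5)}
    (hw : IsPath q w) : ∃ p ∈ X q, ∀ u, u <+: w → p ∈ cylinder q u := by
  obtain ⟨x, hx⟩ := hXne (endState q w)
  refine ⟨pathMap w x, hX.image_pathMap_subset hw ⟨x, hx, rfl⟩, ?_⟩
  rintro u ⟨v, rfl⟩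
  rw [isPath_append] at hw
  rw [endState_append] at hx
  exact ⟨pathMap v x, pathMap_mem_hull hw.2 (hXh _ hx), (pathMap_append u v x).symm⟩

theorem hausdorffMeasure_ne_top (hX : IsAttractor X) (hXh : ∀ q, X q ⊆ Icc 0 (hullLen q))
    (ht : t ^ 3 - t ^ 2 - 2 * t + 1 = 0) (h₁ : 1 / 3 ≤ t) (h₂ : t ≤ 1 / 2) (q : Bool) :
    μH[Real.logb 3⁻¹ t] (X q) ≠ ∞ := by
  set s := Real.logb 3⁻¹ t
  have hcover := Measure.hausdorffMeasure_le_liminf_sum s (X q)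
    (fun n => ENNReal.ofReal (4 * 3⁻¹ ^ n))
    (by simpa using ENNReal.tendsto_ofReal tendsto_four_mul_inv_three_pow)
    (fun n (w : paths q n) => cylinder q w)
    (Eventually.of_forall fun n w => by
      rw [ediam_cylinder]
      exact ENNReal.ofReal_le_ofReal (width_le_of_mem_paths w.2))
    (Eventually.of_forall fun n => by
      simpa only [iUnion_subtype] using hX.subset_biUnion_cylinder hXh n q)
  refine ne_top_of_le_ne_top (ENNReal.ofReal_ne_top (r := 9 * 4 ^ s)) (hcover.trans ?_)
  refine (liminf_le_liminf (Eventually.of_forall fun n => ?_)).trans_eq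
    (liminf_const (ENNReal.ofReal (9 * 4 ^ s)))
  calc ∑ w : paths q n, ediam (cylinder q w) ^ s
      ≤ ∑ w : paths q n, ENNReal.ofReal (9 * 4 ^ s * pathWeight t q w) :=
        Finset.sum_le_sum fun w _ => ediam_cylinder_rpow_logb_le h₁ h₂ q w
    _ = ENNReal.ofReal (9 * 4 ^ s * stateWeight t q) := by
        rw [← ENNReal.ofReal_sum_of_nonneg fun w _ => by
          have := pathWeight_nonneg h₁ h₂ q w; positivity]
        rw [Finset.sum_coe_sort (paths q n) (fun w => 9 * 4 ^ s * pathWeight t q w),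
          ← Finset.mul_sum, sum_pathWeight ht]
    _ ≤ ENNReal.ofReal (9 * 4 ^ s) := by
        refine ENNReal.ofReal_le_ofReal ?_
        have := (stateWeight_mem_Icc h₁ h₂ q).2
        have : (0 : ℝ) ≤ 4 ^ s := by positivity
        nlinarith

lemma exists_prefix_mem_cutAt (hX : IsAttractor X) (hXh : ∀ q, X q ⊆ Icc 0 (hullLen q))
    (hXne : ∀ q, (X q).Nonempty) {ι : Type*} {F : Finset ι} {U : ι → Set ℝ} {q : Bool} {n : ℕ}
    (hcov : X q ⊆ ⋃ i ∈ F, U i) (hU : ∀ i ∈ F, 4 * 3⁻¹ ^ n ≤ diam (U i) ∧ diam (U i) < 2)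
    {w : List (Fin 5)} (hw : w ∈ paths q n) :
    ∃ i ∈ F, ∃ u ∈ cutAt q (diam (U i)) n, (cylinder q u ∩ U i).Nonempty ∧ u <+: w := by
  obtain ⟨p, hpX, hp⟩ := hX.exists_mem_forall_prefix hXh hXne (mem_paths.mp hw).2
  obtain ⟨i, hi, hpU⟩ := mem_iUnion₂.mp (hcov hpX)
  obtain ⟨u, hu, hpre⟩ := exists_mem_cutAt_prefix hw
    ((hU i hi).2.trans_le (hullLen_mem_Icc q).1) ((width_le_of_mem_paths hw).trans (hU i hi).1)
  exact ⟨i, hi, u, hu, ⟨p, hp u hpre, hpU⟩, hpre⟩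

theorem stateWeight_div_le_sum_diam_rpow (hX : IsAttractor X)
    (hXh : ∀ q, X q ⊆ Icc 0 (hullLen q)) (hXne : ∀ q, (X q).Nonempty)
    (ht : t ^ 3 - t ^ 2 - 2 * t + 1 = 0) (h₁ : 1 / 3 ≤ t) (h₂ : t ≤ 1 / 2)
    {ι : Type*} {F : Finset ι} {U : ι → Set ℝ} {q : Bool} (hcov : X q ⊆ ⋃ i ∈ F, U i)
    (hU : ∀ i ∈ F, 0 < diam (U i) ∧ diam (U i) < 2) :
    stateWeight t q / 109 ≤ ∑ i ∈ F, diam (U i) ^ Real.logb 3⁻¹ t := by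
  classical
  obtain ⟨n, hn⟩ : ∃ n : ℕ, ∀ i ∈ F, 4 * 3⁻¹ ^ n ≤ diam (U i) :=
    ((Filter.eventually_all_finset F).2 fun i hi =>
      tendsto_four_mul_inv_three_pow.eventually (eventually_le_nhds (hU i hi).1)).exists
  let C i := (cutAt q (diam (U i)) n).filter fun u => (cylinder q u ∩ U i).Nonempty
  have hweight := stateWeight_le_sum_pathWeight ht h₁ h₂ (S := F.sigma C) (u := Sigma.snd)
    (fun k hk => (mem_cutAt.mp (Finset.mem_filter.mp (Finset.mem_sigma.mp hk).2).1).1)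
    fun w hw => by
      obtain ⟨i, hi, u, hu, hUu, hpre⟩ :=
        hX.exists_prefix_mem_cutAt hXh hXne hcov (fun i hi => ⟨hn i hi, (hU i hi).2⟩) hw
      exact ⟨⟨i, u⟩, Finset.mem_sigma.mpr ⟨hi, Finset.mem_filter.mpr ⟨hu, hUu⟩⟩, hpre⟩
  rw [Finset.sum_sigma] at hweight
  have hC (i : ι) (hi : i ∈ F) : ∑ u ∈ C i, pathWeight t q u ≤ 109 * diam (U i) ^ Real.logb 3⁻¹ t :=
    have hbdd : Bornology.IsBounded (U i) :=
      not_not.mp fun h => (hU i hi).1.ne' (diam_eq_zero_of_unbounded h)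
    sum_pathWeight_filter_cutAt_le h₁ h₂ (hU i hi).1 fun x hx y hy =>
      Real.dist_eq x y ▸ dist_le_diam_of_mem hbdd hx hy
  calc stateWeight t q / 109 ≤ (∑ i ∈ F, 109 * diam (U i) ^ Real.logb 3⁻¹ t) / 109 := by
        gcongr
        exact hweight.trans (Finset.sum_le_sum hC)
    _ = ∑ i ∈ F, diam (U i) ^ Real.logb 3⁻¹ t := by rw [← Finset.mul_sum]; field_simp

theorem hausdorffMeasure_ne_zero (hX : IsAttractor X) (hXh : ∀ q, X q ⊆ Icc 0 (hullLen q))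
    (hXne : ∀ q, (X q).Nonempty) {q : Bool} (hXc : IsCompact (X q))
    (ht : t ^ 3 - t ^ 2 - 2 * t + 1 = 0) (h₁ : 1 / 3 ≤ t) (h₂ : t ≤ 1 / 2) :
    μH[Real.logb 3⁻¹ t] (X q) ≠ 0 := by
  have hc : 0 < stateWeight t q / 109 := by
    linarith [(stateWeight_mem_Icc h₁ h₂ q).1]
  refine (ENNReal.ofReal_pos.mpr (half_pos hc)).trans_le
    (Real.ofReal_le_hausdorffMeasure_of_finite_covers hXc hc (logb_inv_three_pos h₁ h₂)
      (logb_inv_three_le_one h₁) two_pos fun _ _ hcov hU =>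
        hX.stateWeight_div_le_sum_diam_rpow hXh hXne ht h₁ h₂ hcov hU)
    |>.ne'

theorem dimH_eq (hX : IsAttractor X) (hXh : ∀ q, X q ⊆ Icc 0 (hullLen q))
    (hXne : ∀ q, (X q).Nonempty) {q : Bool} (hXc : IsCompact (X q))
    (ht : t ^ 3 - t ^ 2 - 2 * t + 1 = 0) (h₁ : 1 / 3 ≤ t) (h₂ : t ≤ 1 / 2) :
    dimH (X q) = ENNReal.ofReal (Real.logb 3⁻¹ t) := by
  have hs : ((Real.logb 3⁻¹ t).toNNReal : ℝ) = Real.logb 3⁻¹ t :=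
    Real.coe_toNNReal _ (logb_inv_three_pos h₁ h₂).le
  refine dimH_of_hausdorffMeasure_ne_zero_ne_top ?_ ?_ <;> rw [hs]
  exacts [hX.hausdorffMeasure_ne_zero hXh hXne hXc ht h₁ h₂,
    hX.hausdorffMeasure_ne_top hXh ht h₁ h₂ q]

end IsAttractor

def sumState (K : Set ℝ) (q : Bool) : Set ℝ := if q then (3 : ℝ) • K + K else K + K

lemma sumState_nonempty {K : Set ℝ} (hKne : K.Nonempty) (q : Bool) : (sumState K q).Nonempty := by
  obtain ⟨x, hx⟩ := hKne
  cases q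
  exacts [⟨x + x, add_mem_add hx hx⟩, ⟨3 • x + x, add_mem_add (smul_mem_smul_set hx) hx⟩]

section Sumset

variable {K : Set ℝ} (hK : K = (fun x => x / 3) '' K ∪ (fun x => (x + 8) / 9) '' K)
include hK

lemma div_three_mem {x : ℝ} (hx : x ∈ K) : x / 3 ∈ K := by
  rw [hK]; exact Or.inl ⟨x, hx, rfl⟩

lemma add_eight_div_nine_mem {x : ℝ} (hx : x ∈ K) : (x + 8) / 9 ∈ K := by
  rw [hK]; exact Or.inr ⟨x, hx, rfl⟩

lemma mem_cases {x : ℝ} (hx : x ∈ K) :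
    (∃ a ∈ K, x = a / 3) ∨ (∃ a ∈ K, x = (a + 8) / 9) := by
  rw [hK] at hx
  rcases hx with ⟨a, ha, rfl⟩ | ⟨a, ha, rfl⟩
  exacts [Or.inl ⟨a, ha, rfl⟩, Or.inr ⟨a, ha, rfl⟩]

lemma subset_Icc_zero_one (hKc : IsCompact K) : K ⊆ Icc 0 1 := by
  obtain rfl | hKne := K.eq_empty_or_nonempty
  · exact empty_subset _
  have hsup : sSup K ≤ 1 := by
    rcases mem_cases hK (hKc.sSup_mem hKne) with ⟨a, ha, h⟩ | ⟨a, ha, h⟩ <;>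
      linarith [le_csSup hKc.bddAbove ha]
  have hinf : 0 ≤ sInf K := by
    rcases mem_cases hK (hKc.sInf_mem hKne) with ⟨a, ha, h⟩ | ⟨a, ha, h⟩ <;>
      linarith [csInf_le hKc.bddBelow ha]
  exact fun x hx => ⟨hinf.trans (csInf_le hKc.bddBelow hx), (le_csSup hKc.bddAbove hx).trans hsup⟩

lemma sumState_subset_hull (hKc : IsCompact K) (q : Bool) :
    sumState K q ⊆ Icc 0 (hullLen q) := by
  have h01 := subset_Icc_zero_one hK hKc
  cases q
  · rintro _ ⟨x, hx, y, hy, rfl⟩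
    obtain ⟨⟨hx₀, hx₁⟩, ⟨hy₀, hy₁⟩⟩ := And.intro (h01 hx) (h01 hy)
    exact ⟨by dsimp only; linarith, by norm_num [hullLen]; linarith⟩
  · rintro _ ⟨_, ⟨x, hx, rfl⟩, y, hy, rfl⟩
    obtain ⟨⟨hx₀, hx₁⟩, ⟨hy₀, hy₁⟩⟩ := And.intro (h01 hx) (h01 hy)
    exact ⟨by simp only [smul_eq_mul]; linarith, by norm_num [hullLen]; linarith⟩

lemma sumState_false_subset_true : sumState K false ⊆ sumState K true := by
  rintro _ ⟨x, hx, y, hy, rfl⟩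
  exact ⟨3 * (x / 3), ⟨x / 3, div_three_mem hK hx, rfl⟩, y, hy, by ring⟩

lemma image_edgeMap_subset_sumState {q : Bool} {e : Fin 5} (he : e ∈ edgesFrom q) :
    edgeMap e '' sumState K (target e) ⊆ sumState K q := by
  have hfalse {e : Fin 5} (he : e ∈ ({0, 1, 2} : Finset (Fin 5))) :
      edgeMap e '' sumState K (target e) ⊆ sumState K false := by
    fin_cases he
    · rintro _ ⟨_, ⟨x, hx, y, hy, rfl⟩, rfl⟩
      exact ⟨x / 3, div_three_mem hK hx, y / 3, div_three_mem hK hy, by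
        simp [edgeMap, shift, expo]; ring⟩
    · rintro _ ⟨_, ⟨_, ⟨x, hx, rfl⟩, y, hy, rfl⟩, rfl⟩
      exact ⟨x / 3, div_three_mem hK hx, (y + 8) / 9, add_eight_div_nine_mem hK hy, by
        simp [edgeMap, shift, expo]; ring⟩
    · rintro _ ⟨_, ⟨x, hx, y, hy, rfl⟩, rfl⟩
      exact ⟨(x + 8) / 9, add_eight_div_nine_mem hK hx, (y + 8) / 9,
        add_eight_div_nine_mem hK hy, by simp [edgeMap, shift, expo]; ring⟩
  cases q
  · exact hfalse he
  · by_cases he' : e ∈ ({0, 1, 2} : Finset (Fin 5))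
    · exact (hfalse he').trans (sumState_false_subset_true hK)
    · have : e = 3 ∨ e = 4 := by fin_cases e <;> simp at he' ⊢
      rcases this with rfl | rfl
      · rintro _ ⟨_, ⟨x, hx, y, hy, rfl⟩, rfl⟩
        exact ⟨3 * ((y + 8) / 9), ⟨(y + 8) / 9, add_eight_div_nine_mem hK hy, rfl⟩, x / 3,
          div_three_mem hK hx, by simp [edgeMap, shift, expo]; ring⟩
      · rintro _ ⟨_, ⟨_, ⟨x, hx, rfl⟩, y, hy, rfl⟩, rfl⟩
        exact ⟨3 * ((x + 8) / 9), ⟨(x + 8) / 9, add_eight_div_nine_mem hK hx, rfl⟩,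
          (y + 8) / 9, add_eight_div_nine_mem hK hy, by simp [edgeMap, shift, expo]; ring⟩

lemma sumState_subset_biUnion (q : Bool) :
    sumState K q ⊆ ⋃ e ∈ edgesFrom q, edgeMap e '' sumState K (target e) := by
  have hfalse : sumState K false ⊆ ⋃ e ∈ ({0, 1, 2} : Finset (Fin 5)),
      edgeMap e '' sumState K (target e) := by
    rintro _ ⟨x, hx, y, hy, rfl⟩
    simp only [mem_iUnion, mem_image, Finset.mem_insert, Finset.mem_singleton, exists_prop]
    rcases mem_cases hK hx with ⟨a, ha, rfl⟩ | ⟨a, ha, rfl⟩ <;>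
      rcases mem_cases hK hy with ⟨b, hb, rfl⟩ | ⟨b, hb, rfl⟩
    · exact ⟨0, by simp, a + b, ⟨a, ha, b, hb, rfl⟩, by simp [edgeMap, shift, expo]; ring⟩
    · exact ⟨1, by simp, 3 * a + b, ⟨3 * a, ⟨a, ha, rfl⟩, b, hb, rfl⟩, by
        simp [edgeMap, shift, expo]; ring⟩
    · exact ⟨1, by simp, 3 * b + a, ⟨3 * b, ⟨b, hb, rfl⟩, a, ha, rfl⟩, by
        simp [edgeMap, shift, expo]; ring⟩
    · exact ⟨2, by simp, a + b, ⟨a, ha, b, hb, rfl⟩, by simp [edgeMap, shift, expo]; ring⟩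
  cases q
  · exact hfalse
  · rintro _ ⟨_, ⟨x, hx, rfl⟩, y, hy, rfl⟩
    simp only [mem_iUnion, mem_image, exists_prop]
    rcases mem_cases hK hx with ⟨a, ha, rfl⟩ | ⟨a, ha, rfl⟩
    · obtain ⟨e, he, hz⟩ := mem_iUnion₂.mp <| hfalse (show (3 : ℝ) • (a / 3) + y ∈ sumState K false
        from ⟨a, ha, y, hy, by simp only [smul_eq_mul]; ring⟩)
      exact ⟨e, by simp [edgesFrom], hz⟩
    · rcases mem_cases hK hy with ⟨b, hb, rfl⟩ | ⟨b, hb, rfl⟩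
      · exact ⟨3, by simp [edgesFrom], a + b, ⟨a, ha, b, hb, rfl⟩, by
          simp [edgeMap, shift, expo]; ring⟩
      · exact ⟨4, by simp [edgesFrom], 3 * a + b, ⟨3 * a, ⟨a, ha, rfl⟩, b, hb, rfl⟩, by
          simp [edgeMap, shift, expo]; ring⟩

lemma isAttractor_sumState : IsAttractor (sumState K) := fun q =>
  (sumState_subset_biUnion hK q).antisymm
    (iUnion₂_subset fun _ he => image_edgeMap_subset_sumState hK he)

end Sumset

lemma mem_Icc_of_isLeast {t₀ : ℝ}
    (ht₀ : IsLeast {t : ℝ | 0 < t ∧ t ^ 3 - t ^ 2 - 2 * t + 1 = 0} t₀) :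
    t₀ ∈ Icc (1 / 3) (1 / 2) := by
  obtain ⟨⟨hpos, hroot⟩, hleast⟩ := ht₀
  refine ⟨by nlinarith [sq_nonneg t₀, sq_nonneg (t₀ - 1 / 3)], ?_⟩
  obtain ⟨c, hc, hc0⟩ := intermediate_value_Icc' (by norm_num : (0 : ℝ) ≤ 1 / 2)
    (f := fun t : ℝ => t ^ 3 - t ^ 2 - 2 * t + 1) (by fun_prop)
    (show (0 : ℝ) ∈ Icc _ _ by norm_num)
  have hc₀ : 0 < c := hc.1.lt_of_ne fun h => by subst h; norm_num at hc0
  exact (hleast ⟨hc₀, hc0⟩).trans hc.2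

end CantorSumset

/-- for the attractor `K` of the IFS `{x/3, (x+8)/9}`, the Hausdorff
dimension of `K+K` is `ln t₀ / (- ln 3)`, where `t₀` is the smallest positive root of
`t³ - t² - 2t + 1 = 0`. -/
theorem statement16 (K : Set ℝ)
    (hKne : K.Nonempty) (hKc : IsCompact K)
    (hK : K = (fun x => x / 3) '' K ∪ (fun x => (x + 8) / 9) '' K)
    (t₀ : ℝ)
    (ht₀ : IsLeast {t : ℝ | 0 < t ∧ t ^ 3 - t ^ 2 - 2 * t + 1 = 0} t₀) :
    dimH (K + K) = ENNReal.ofReal (Real.log t₀ / (- Real.log 3)) := by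
  obtain ⟨h₁, h₂⟩ := CantorSumset.mem_Icc_of_isLeast ht₀
  have hlog : Real.log t₀ / -Real.log 3 = Real.logb 3⁻¹ t₀ := by rw [Real.logb, Real.log_inv]
  rw [hlog]
  change dimH (CantorSumset.sumState K false) = _
  exact (CantorSumset.isAttractor_sumState hK).dimH_eq (CantorSumset.sumState_subset_hull hK hKc)
    (CantorSumset.sumState_nonempty hKne) (q := false) (hKc.add hKc) ht₀.1.2 h₁ h₂
end

section
/- Let β > 1, let K₁ ⊂ ℝ be the attractor of the IFS {f₁(x) = x/β, f₂(x) = (x+2)/β} and K₂ ⊂ ℝ the attractor of the IFS {g₁(x) = x/β, g₂(x) = x/β² + 2/β + 2/β²}. Then K₁+K₂ is the self-similar set with IFS {φ₁(x) = x/β, φ₂(x) = (x+2)/β, φ₃(x) = x/β² + 2/β + 4/β², φ₄(x) = x/β² + 4/β + 2/β², φ₅(x) = x/β² + 4/β + 4/β²}; that is, K₁+K₂ = φ₁(K₁+K₂) ∪ φ₂(K₁+K₂) ∪ φ₃(K₁+K₂) ∪ φ₄(K₁+K₂) ∪ φ₅(K₁+K₂). -/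
/-!
Every map of both systems has linear part `x ↦ x / β` or `x ↦ x / β²`, so a sum `f(K₁) + g(K₂)` of
images under maps with equal linear parts is the image of `K₁ + K₂` under one affine map. Splitting
`K₂ = g₁(K₂) ∪ g₂(K₂)`, and `K₁` into its first-level pieces against `g₁(K₂)` and its second-level
pieces against `g₂(K₂)`, writes `K₁ + K₂` as `φ₁, …, φ₅` applied to it together with the extra piece
`f₁f₁(K₁) + g₂(K₂) = φ₂(φ₂(K₁ + K₂))`, which lies in `φ₂(K₁ + K₂)` because `φ₂(K₁ + K₂) ⊆ K₁ + K₂`.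
-/

open Pointwise Set

theorem Set.image_add_of_map_add {α β : Type*} [Add α] [Add β] {f g h : α → β}
    (hfg : ∀ x y, h (x + y) = f x + g y) (s t : Set α) : h '' (s + t) = f '' s + g '' t :=
  image_image2_distrib hfg

theorem Set.eq_image_comp_union_of_eq_image_union {α : Type*} {s : Set α} {f g : α → α}
    (h : s = f '' s ∪ g '' s) :
    s = (f ∘ f) '' s ∪ (f ∘ g) '' s ∪ (g ∘ f) '' s ∪ (g ∘ g) '' s := by
  conv_lhs => rw [h, h]
  simp only [image_union, image_comp, union_assoc]

section

variable {β : ℝ} {K₁ K₂ : Set ℝ}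

theorem image_add_two_div_add_subset
    (hK₁ : K₁ = (fun x => x / β) '' K₁ ∪ (fun x => (x + 2) / β) '' K₁)
    (hK₂ : K₂ = (fun x => x / β) '' K₂ ∪
      (fun x => x / β ^ 2 + 2 / β + 2 / β ^ 2) '' K₂) :
    (fun x => (x + 2) / β) '' (K₁ + K₂) ⊆ K₁ + K₂ := by
  rw [image_add_of_map_add (f := fun x => (x + 2) / β) (g := fun x => x / β)
    (fun x y => by ring)]
  exact add_subset_add (subset_union_right.trans hK₁.superset)
    (subset_union_left.trans hK₂.superset)

theorem add_image_div_eq_union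
    (hK₁ : K₁ = (fun x => x / β) '' K₁ ∪ (fun x => (x + 2) / β) '' K₁) :
    K₁ + (fun x => x / β) '' K₂ =
      (fun x => x / β) '' (K₁ + K₂) ∪ (fun x => (x + 2) / β) '' (K₁ + K₂) := by
  rw [image_add_of_map_add (f := fun x => x / β) (g := fun x => x / β) (fun x y => by ring),
    image_add_of_map_add (f := fun x => (x + 2) / β) (g := fun x => x / β)
      (fun x y => by ring), ← union_add, ← hK₁]

theorem add_image_div_sq_add_eq_union
    (hK₁ : K₁ = (fun x => x / β) '' K₁ ∪ (fun x => (x + 2) / β) '' K₁) :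
    K₁ + (fun x => x / β ^ 2 + 2 / β + 2 / β ^ 2) '' K₂ =
      (fun x => (x + 2) / β) '' ((fun x => (x + 2) / β) '' (K₁ + K₂)) ∪
      (fun x => x / β ^ 2 + 2 / β + 4 / β ^ 2) '' (K₁ + K₂) ∪
      (fun x => x / β ^ 2 + 4 / β + 2 / β ^ 2) '' (K₁ + K₂) ∪
      (fun x => x / β ^ 2 + 4 / β + 4 / β ^ 2) '' (K₁ + K₂) := by
  set f₁ : ℝ → ℝ := fun x => x / β
  set f₂ : ℝ → ℝ := fun x => (x + 2) / β
  set g₂ : ℝ → ℝ := fun x => x / β ^ 2 + 2 / β + 2 / β ^ 2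
  rw [image_image, image_add_of_map_add (f := f₁ ∘ f₁) (g := g₂),
    image_add_of_map_add (f := f₁ ∘ f₂) (g := g₂), image_add_of_map_add (f := f₂ ∘ f₁) (g := g₂),
    image_add_of_map_add (f := f₂ ∘ f₂) (g := g₂), ← union_add, ← union_add, ← union_add,
    ← eq_image_comp_union_of_eq_image_union hK₁]
  all_goals intro x y; simp only [f₁, f₂, g₂, Function.comp_apply]; ring

end

theorem statement17_general (β : ℝ)
    (K₁ K₂ : Set ℝ)
    (hK₁ : K₁ = (fun x => x / β) '' K₁ ∪ (fun x => (x + 2) / β) '' K₁)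
    (hK₂ : K₂ = (fun x => x / β) '' K₂ ∪
      (fun x => x / β ^ 2 + 2 / β + 2 / β ^ 2) '' K₂) :
    K₁ + K₂ =
      (fun x => x / β) '' (K₁ + K₂) ∪
      (fun x => (x + 2) / β) '' (K₁ + K₂) ∪
      (fun x => x / β ^ 2 + 2 / β + 4 / β ^ 2) '' (K₁ + K₂) ∪
      (fun x => x / β ^ 2 + 4 / β + 2 / β ^ 2) '' (K₁ + K₂) ∪
      (fun x => x / β ^ 2 + 4 / β + 4 / β ^ 2) '' (K₁ + K₂) := by
  have hφ₂φ₂ := image_mono (f := fun x => (x + 2) / β) (image_add_two_div_add_subset hK₁ hK₂)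
  conv_lhs => rw [hK₂, add_union, add_image_div_eq_union hK₁, add_image_div_sq_add_eq_union hK₁]
  rw [← union_assoc, ← union_assoc, ← union_assoc, union_eq_left.2 (hφ₂φ₂.trans subset_union_right)]

/-- for `K₁` the attractor of `{x/β, (x+2)/β}` and `K₂` the attractor of
`{x/β, x/β² + 2/β + 2/β²}`, the sumset `K₁+K₂` is the self-similar set of the IFS
`{φ₁,…,φ₅}` given below. -/
theorem statement17 (β : ℝ) (hβ : 1 < β)
    (K₁ K₂ : Set ℝ)
    (hK₁ne : K₁.Nonempty) (hK₁c : IsCompact K₁)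
    (hK₁ : K₁ = (fun x => x / β) '' K₁ ∪ (fun x => (x + 2) / β) '' K₁)
    (hK₂ne : K₂.Nonempty) (hK₂c : IsCompact K₂)
    (hK₂ : K₂ = (fun x => x / β) '' K₂ ∪
      (fun x => x / β ^ 2 + 2 / β + 2 / β ^ 2) '' K₂) :
    K₁ + K₂ =
      (fun x => x / β) '' (K₁ + K₂) ∪
      (fun x => (x + 2) / β) '' (K₁ + K₂) ∪
      (fun x => x / β ^ 2 + 2 / β + 4 / β ^ 2) '' (K₁ + K₂) ∪
      (fun x => x / β ^ 2 + 4 / β + 2 / β ^ 2) '' (K₁ + K₂) ∪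
      (fun x => x / β ^ 2 + 4 / β + 4 / β ^ 2) '' (K₁ + K₂) :=
  statement17_general β K₁ K₂ hK₁ hK₂
end
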